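/- arXiv:1812.00589 — 6 statements merged into one kernel-verified Lean document; each statement's English description precedes it below -/
import Mathlib

section
/- Let F(x₁,x₂,z) = (x₁−α₁(z))² + (x₂−α₂(z))² − r(z)², describing a surface foliated by Euclidean circles of radius r(z) > 0 centered at (α(z), z) in the planes x₃ = z. Then the zero mean curvature equation −⟨∇ᴸF,∇ᴸF⟩ΔᴸF + Hess F(∇ᴸF,∇ᴸF) = 0, restricted to F = 0, is equivalent to F_z² + r²(F_{zz} − 2) + 2 F_z ⟨x−α, α'⟩ = 0, where x = (x₁,x₂) and ⟨·,·⟩ is the Euclidean inner product on ℝ². -/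
noncomputable section

def lip (v w : ℝ × ℝ × ℝ) : ℝ := v.1 * w.1 + v.2.1 * w.2.1 - v.2.2 * w.2.2

def pd (i : Fin 3) (f : ℝ × ℝ × ℝ → ℝ) (p : ℝ × ℝ × ℝ) : ℝ :=
  fderiv ℝ f p (if i = 0 then (1, 0, 0) else if i = 1 then (0, 1, 0) else (0, 0, 1))

def gradL (F : ℝ × ℝ × ℝ → ℝ) (p : ℝ × ℝ × ℝ) : ℝ × ℝ × ℝ :=
  (pd 0 F p, pd 1 F p, -(pd 2 F p))

def lapL (F : ℝ × ℝ × ℝ → ℝ) (p : ℝ × ℝ × ℝ) : ℝ :=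
  pd 0 (pd 0 F) p + pd 1 (pd 1 F) p - pd 2 (pd 2 F) p

def hessQ (F : ℝ × ℝ × ℝ → ℝ) (p v : ℝ × ℝ × ℝ) : ℝ :=
  fderiv ℝ (fun q => fderiv ℝ F q v) p v

/-! ### Auxiliary machinery -/

/-- Coordinate projections as continuous linear maps. -/
def CA : (ℝ × ℝ × ℝ) →L[ℝ] ℝ := ContinuousLinearMap.fst ℝ ℝ (ℝ × ℝ)
def CB : (ℝ × ℝ × ℝ) →L[ℝ] ℝ :=
  (ContinuousLinearMap.fst ℝ ℝ ℝ).comp (ContinuousLinearMap.snd ℝ ℝ (ℝ × ℝ))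
def CC : (ℝ × ℝ × ℝ) →L[ℝ] ℝ :=
  (ContinuousLinearMap.snd ℝ ℝ ℝ).comp (ContinuousLinearMap.snd ℝ ℝ (ℝ × ℝ))

@[simp] lemma CA_apply (w : ℝ × ℝ × ℝ) : CA w = w.1 := rfl
@[simp] lemma CB_apply (w : ℝ × ℝ × ℝ) : CB w = w.2.1 := rfl
@[simp] lemma CC_apply (w : ℝ × ℝ × ℝ) : CC w = w.2.2 := rfl

/-- The shape derivative lemma: the functions we encounter all have the form
`d*x² + e*y² + a(z)*x + b(z)*y + c(z)`. -/
lemma shape_hasFDerivAt (d e : ℝ) (a b c : ℝ → ℝ) (a' b' c' : ℝ) (q : ℝ × ℝ × ℝ)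
    (ha : HasDerivAt a a' q.2.2) (hb : HasDerivAt b b' q.2.2) (hc : HasDerivAt c c' q.2.2) :
    HasFDerivAt
      (fun q : ℝ × ℝ × ℝ => d * (q.1 * q.1) + e * (q.2.1 * q.2.1)
        + a q.2.2 * q.1 + b q.2.2 * q.2.1 + c q.2.2)
      (((2 * d * q.1 + a q.2.2) • CA + (2 * e * q.2.1 + b q.2.2) • CB)
        + (a' * q.1 + b' * q.2.1 + c') • CC) q := by
  have h1 : HasFDerivAt (fun q : ℝ × ℝ × ℝ => q.1) CA q := CA.hasFDerivAt
  have h2 : HasFDerivAt (fun q : ℝ × ℝ × ℝ => q.2.1) CB q := CB.hasFDerivAt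
  have h3 : HasFDerivAt (fun q : ℝ × ℝ × ℝ => q.2.2) CC q := CC.hasFDerivAt
  have hac : HasFDerivAt (fun q : ℝ × ℝ × ℝ => a q.2.2) (a' • CC) q :=
    ha.comp_hasFDerivAt q h3
  have hbc : HasFDerivAt (fun q : ℝ × ℝ × ℝ => b q.2.2) (b' • CC) q :=
    hb.comp_hasFDerivAt q h3
  have hcc : HasFDerivAt (fun q : ℝ × ℝ × ℝ => c q.2.2) (c' • CC) q :=
    hc.comp_hasFDerivAt q h3
  have H := (((((h1.mul h1).const_mul d).add ((h2.mul h2).const_mul e)).add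
    (hac.mul h1)).add (hbc.mul h2)).add hcc
  refine H.congr_fderiv ?_
  apply ContinuousLinearMap.ext
  intro w
  simp [ContinuousLinearMap.add_apply, ContinuousLinearMap.smul_apply, smul_eq_mul]
  ring

lemma pd_of_shape (d e : ℝ) (a b c : ℝ → ℝ) (a' b' c' : ℝ)
    (f : ℝ × ℝ × ℝ → ℝ)
    (hf : f = fun q : ℝ × ℝ × ℝ => d * (q.1 * q.1) + e * (q.2.1 * q.2.1)
        + a q.2.2 * q.1 + b q.2.2 * q.2.1 + c q.2.2)
    (q : ℝ × ℝ × ℝ)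
    (ha : HasDerivAt a a' q.2.2) (hb : HasDerivAt b b' q.2.2) (hc : HasDerivAt c c' q.2.2) :
    pd 0 f q = 2 * d * q.1 + a q.2.2 ∧
    pd 1 f q = 2 * e * q.2.1 + b q.2.2 ∧
    pd 2 f q = a' * q.1 + b' * q.2.1 + c' ∧
    (∀ v : ℝ × ℝ × ℝ, fderiv ℝ f q v =
      (2 * d * q.1 + a q.2.2) * v.1 + (2 * e * q.2.1 + b q.2.2) * v.2.1
        + (a' * q.1 + b' * q.2.1 + c') * v.2.2) := by
  subst hf
  have H := shape_hasFDerivAt d e a b c a' b' c' q ha hb hc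
  have hfd := H.fderiv
  refine ⟨?_, ?_, ?_, ?_⟩
  · simp [pd, hfd, ContinuousLinearMap.add_apply, ContinuousLinearMap.smul_apply, smul_eq_mul]
  · simp [pd, hfd, ContinuousLinearMap.add_apply, ContinuousLinearMap.smul_apply, smul_eq_mul]
  · simp [pd, hfd, ContinuousLinearMap.add_apply, ContinuousLinearMap.smul_apply, smul_eq_mul]
  · intro v
    simp [hfd, ContinuousLinearMap.add_apply, ContinuousLinearMap.smul_apply, smul_eq_mul]

/-- For F(x₁,x₂,z) = (x₁−α₁(z))² + (x₂−α₂(z))² − r(z)², on the level set F = 0,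
the zero mean curvature equation is equivalent to
F_z² + r²(F_{zz} − 2) + 2 F_z ⟨x−α, α'⟩ = 0. -/
theorem circles_in_spacelike_planes_equation
    (α₁ α₂ r : ℝ → ℝ) (hα₁ : ContDiff ℝ (⊤ : ℕ∞) α₁) (hα₂ : ContDiff ℝ (⊤ : ℕ∞) α₂)
    (hr : ContDiff ℝ (⊤ : ℕ∞) r) (hrpos : ∀ z, 0 < r z)
    (F : ℝ × ℝ × ℝ → ℝ)
    (hF : F = fun p => (p.1 - α₁ p.2.2)^2 + (p.2.1 - α₂ p.2.2)^2 - (r p.2.2)^2)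
    (p : ℝ × ℝ × ℝ) (hp : F p = 0) :
    (-(lip (gradL F p) (gradL F p)) * lapL F p + hessQ F p (gradL F p) = 0) ↔
      (pd 2 F p)^2 + (r p.2.2)^2 * (pd 2 (pd 2 F) p - 2)
        + 2 * pd 2 F p *
          ((p.1 - α₁ p.2.2) * deriv α₁ p.2.2 + (p.2.1 - α₂ p.2.2) * deriv α₂ p.2.2) = 0 := by
  -- differentiability facts
  have hα₁d : Differentiable ℝ α₁ := hα₁.differentiable (by simp)
  have hα₂d : Differentiable ℝ α₂ := hα₂.differentiable (by simp)
  have hrd : Differentiable ℝ r := hr.differentiable (by simp)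
  have hα₁' : ContDiff ℝ ((⊤ : ℕ∞) : WithTop ℕ∞) α₁ := hα₁.of_le (by simp)
  have hα₂' : ContDiff ℝ ((⊤ : ℕ∞) : WithTop ℕ∞) α₂ := hα₂.of_le (by simp)
  have hr' : ContDiff ℝ ((⊤ : ℕ∞) : WithTop ℕ∞) r := hr.of_le (by simp)
  have hdα₁ : Differentiable ℝ (deriv α₁) :=
    ((contDiff_infty_iff_deriv.mp hα₁').2).differentiable (by simp)
  have hdα₂ : Differentiable ℝ (deriv α₂) :=
    ((contDiff_infty_iff_deriv.mp hα₂').2).differentiable (by simp)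
  have hdr : Differentiable ℝ (deriv r) :=
    ((contDiff_infty_iff_deriv.mp hr').2).differentiable (by simp)
  -- shape data for F
  have hFshape : F = fun q : ℝ × ℝ × ℝ => 1 * (q.1 * q.1) + 1 * (q.2.1 * q.2.1)
      + (fun z => -(2 * α₁ z)) q.2.2 * q.1 + (fun z => -(2 * α₂ z)) q.2.2 * q.2.1
      + (fun z => α₁ z * α₁ z + α₂ z * α₂ z - r z * r z) q.2.2 := by
    rw [hF]; funext q; ring
  -- first derivatives of F at an arbitrary point q
  have hFder : ∀ q : ℝ × ℝ × ℝ,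
      pd 0 F q = 2 * 1 * q.1 + (-(2 * α₁ q.2.2)) ∧
      pd 1 F q = 2 * 1 * q.2.1 + (-(2 * α₂ q.2.2)) ∧
      pd 2 F q = (-(2 * deriv α₁ q.2.2)) * q.1 + (-(2 * deriv α₂ q.2.2)) * q.2.1
        + (2 * α₁ q.2.2 * deriv α₁ q.2.2 + 2 * α₂ q.2.2 * deriv α₂ q.2.2
            - 2 * r q.2.2 * deriv r q.2.2) ∧
      (∀ v : ℝ × ℝ × ℝ, fderiv ℝ F q v =
        (2 * 1 * q.1 + (-(2 * α₁ q.2.2))) * v.1 + (2 * 1 * q.2.1 + (-(2 * α₂ q.2.2))) * v.2.1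
          + ((-(2 * deriv α₁ q.2.2)) * q.1 + (-(2 * deriv α₂ q.2.2)) * q.2.1
            + (2 * α₁ q.2.2 * deriv α₁ q.2.2 + 2 * α₂ q.2.2 * deriv α₂ q.2.2
              - 2 * r q.2.2 * deriv r q.2.2)) * v.2.2) := by
    intro q
    refine pd_of_shape 1 1 (fun z => -(2 * α₁ z)) (fun z => -(2 * α₂ z))
      (fun z => α₁ z * α₁ z + α₂ z * α₂ z - r z * r z) _ _ _ F hFshape q ?_ ?_ ?_
    · exact ((hα₁d q.2.2).hasDerivAt.const_mul 2).neg
    · exact ((hα₂d q.2.2).hasDerivAt.const_mul 2).neg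
    · have h1 := (hα₁d q.2.2).hasDerivAt.mul (hα₁d q.2.2).hasDerivAt
      have h2 := (hα₂d q.2.2).hasDerivAt.mul (hα₂d q.2.2).hasDerivAt
      have h3 := (hrd q.2.2).hasDerivAt.mul (hrd q.2.2).hasDerivAt
      have := (h1.add h2).sub h3
      refine this.congr_deriv ?_
      ring
  obtain ⟨hpd0, hpd1, hpd2, hfdv⟩ := hFder p
  -- second derivatives: pd 0 (pd 0 F), pd 1 (pd 1 F)
  have hpd0fun : pd 0 F = fun q : ℝ × ℝ × ℝ => 0 * (q.1 * q.1) + 0 * (q.2.1 * q.2.1)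
      + (fun _ : ℝ => (2 : ℝ)) q.2.2 * q.1 + (fun _ : ℝ => (0 : ℝ)) q.2.2 * q.2.1
      + (fun z => -(2 * α₁ z)) q.2.2 := by
    funext q
    rw [(hFder q).1]; ring
  have hpd00 : pd 0 (pd 0 F) p = 2 := by
    have := (pd_of_shape 0 0 _ _ _ 0 0 (-(2 * (deriv α₁ p.2.2))) (pd 0 F) hpd0fun p
      (hasDerivAt_const _ _) (hasDerivAt_const _ _)
      (((hα₁d p.2.2).hasDerivAt.const_mul 2).neg)).1
    simpa using this
  have hpd1fun : pd 1 F = fun q : ℝ × ℝ × ℝ => 0 * (q.1 * q.1) + 0 * (q.2.1 * q.2.1)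
      + (fun _ : ℝ => (0 : ℝ)) q.2.2 * q.1 + (fun _ : ℝ => (2 : ℝ)) q.2.2 * q.2.1
      + (fun z => -(2 * α₂ z)) q.2.2 := by
    funext q
    rw [(hFder q).2.1]; ring
  have hpd11 : pd 1 (pd 1 F) p = 2 := by
    have := (pd_of_shape 0 0 _ _ _ 0 0 (-(2 * (deriv α₂ p.2.2))) (pd 1 F) hpd1fun p
      (hasDerivAt_const _ _) (hasDerivAt_const _ _)
      (((hα₂d p.2.2).hasDerivAt.const_mul 2).neg)).2.1
    simpa using this
  -- second derivative pd 2 (pd 2 F)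
  have hpd2fun : pd 2 F = fun q : ℝ × ℝ × ℝ => 0 * (q.1 * q.1) + 0 * (q.2.1 * q.2.1)
      + (fun z => -(2 * deriv α₁ z)) q.2.2 * q.1 + (fun z => -(2 * deriv α₂ z)) q.2.2 * q.2.1
      + (fun z => 2 * α₁ z * deriv α₁ z + 2 * α₂ z * deriv α₂ z - 2 * r z * deriv r z) q.2.2 := by
    funext q
    rw [(hFder q).2.2.1]; ring
  have hcF' : HasDerivAt
      (fun z => 2 * α₁ z * deriv α₁ z + 2 * α₂ z * deriv α₂ z - 2 * r z * deriv r z)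
      (2 * (deriv α₁ p.2.2) * (deriv α₁ p.2.2) + 2 * (α₁ p.2.2) * (deriv (deriv α₁) p.2.2) + (2 * (deriv α₂ p.2.2) * (deriv α₂ p.2.2) + 2 * (α₂ p.2.2) * (deriv (deriv α₂) p.2.2))
        - (2 * (deriv r p.2.2) * (deriv r p.2.2) + 2 * (r p.2.2) * (deriv (deriv r) p.2.2))) p.2.2 := by
    have h1 := ((hα₁d p.2.2).hasDerivAt.const_mul 2).mul (hdα₁ p.2.2).hasDerivAt
    have h2 := ((hα₂d p.2.2).hasDerivAt.const_mul 2).mul (hdα₂ p.2.2).hasDerivAt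
    have h3 := ((hrd p.2.2).hasDerivAt.const_mul 2).mul (hdr p.2.2).hasDerivAt
    refine ((h1.add h2).sub h3).congr_deriv ?_
    ring
  have hpd22 : pd 2 (pd 2 F) p =
      (-(2 * (deriv (deriv α₁) p.2.2))) * p.1 + (-(2 * (deriv (deriv α₂) p.2.2))) * p.2.1
        + (2 * (deriv α₁ p.2.2) * (deriv α₁ p.2.2) + 2 * (α₁ p.2.2) * (deriv (deriv α₁) p.2.2) + (2 * (deriv α₂ p.2.2) * (deriv α₂ p.2.2) + 2 * (α₂ p.2.2) * (deriv (deriv α₂) p.2.2))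
            - (2 * (deriv r p.2.2) * (deriv r p.2.2) + 2 * (r p.2.2) * (deriv (deriv r) p.2.2))) := by
    exact (pd_of_shape 0 0 _ _ _ (-(2 * (deriv (deriv α₁) p.2.2))) (-(2 * (deriv (deriv α₂) p.2.2))) _ (pd 2 F) hpd2fun p
      (((hdα₁ p.2.2).hasDerivAt.const_mul 2).neg)
      (((hdα₂ p.2.2).hasDerivAt.const_mul 2).neg) hcF').2.2.1
  -- the gradient
  set g : ℝ × ℝ × ℝ := gradL F p with hg
  have hg1 : g.1 = 2 * p.1 - 2 * (α₁ p.2.2) := by rw [hg]; simp [gradL, hpd0]; ring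
  have hg2 : g.2.1 = 2 * p.2.1 - 2 * (α₂ p.2.2) := by rw [hg]; simp [gradL, hpd1]; ring
  have hg3 : g.2.2 = -(pd 2 F p) := by rw [hg]; simp [gradL]
  -- the function q ↦ fderiv F q g
  have hphi : (fun q => fderiv ℝ F q g) = fun q : ℝ × ℝ × ℝ =>
      0 * (q.1 * q.1) + 0 * (q.2.1 * q.2.1)
      + (fun z => 2 * g.1 + (-(2 * deriv α₁ z)) * g.2.2) q.2.2 * q.1
      + (fun z => 2 * g.2.1 + (-(2 * deriv α₂ z)) * g.2.2) q.2.2 * q.2.1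
      + (fun z => (-(2 * α₁ z)) * g.1 + (-(2 * α₂ z)) * g.2.1
          + (2 * α₁ z * deriv α₁ z + 2 * α₂ z * deriv α₂ z - 2 * r z * deriv r z) * g.2.2)
        q.2.2 := by
    funext q
    rw [(hFder q).2.2.2 g]; ring
  have haφ : HasDerivAt (fun z => 2 * g.1 + (-(2 * deriv α₁ z)) * g.2.2)
      ((-(2 * (deriv (deriv α₁) p.2.2))) * g.2.2) p.2.2 := by
    have := (((hdα₁ p.2.2).hasDerivAt.const_mul 2).neg.mul_const g.2.2).const_add (2 * g.1)
    exact this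
  have hbφ : HasDerivAt (fun z => 2 * g.2.1 + (-(2 * deriv α₂ z)) * g.2.2)
      ((-(2 * (deriv (deriv α₂) p.2.2))) * g.2.2) p.2.2 := by
    have := (((hdα₂ p.2.2).hasDerivAt.const_mul 2).neg.mul_const g.2.2).const_add (2 * g.2.1)
    exact this
  have hcφ : HasDerivAt (fun z => (-(2 * α₁ z)) * g.1 + (-(2 * α₂ z)) * g.2.1
      + (2 * α₁ z * deriv α₁ z + 2 * α₂ z * deriv α₂ z - 2 * r z * deriv r z) * g.2.2)
      ((-(2 * (deriv α₁ p.2.2))) * g.1 + (-(2 * (deriv α₂ p.2.2))) * g.2.1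
        + (2 * (deriv α₁ p.2.2) * (deriv α₁ p.2.2) + 2 * (α₁ p.2.2) * (deriv (deriv α₁) p.2.2) + (2 * (deriv α₂ p.2.2) * (deriv α₂ p.2.2) + 2 * (α₂ p.2.2) * (deriv (deriv α₂) p.2.2))
            - (2 * (deriv r p.2.2) * (deriv r p.2.2) + 2 * (r p.2.2) * (deriv (deriv r) p.2.2))) * g.2.2) p.2.2 := by
    have h1 := ((hα₁d p.2.2).hasDerivAt.const_mul 2).neg.mul_const g.1
    have h2 := ((hα₂d p.2.2).hasDerivAt.const_mul 2).neg.mul_const g.2.1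
    have h3 := hcF'.mul_const g.2.2
    exact (h1.add h2).add h3
  have hhess : hessQ F p g =
      (2 * g.1 + (-(2 * (deriv α₁ p.2.2))) * g.2.2) * g.1 + (2 * g.2.1 + (-(2 * (deriv α₂ p.2.2))) * g.2.2) * g.2.1
        + (((-(2 * (deriv (deriv α₁) p.2.2))) * g.2.2) * p.1 + ((-(2 * (deriv (deriv α₂) p.2.2))) * g.2.2) * p.2.1
          + ((-(2 * (deriv α₁ p.2.2))) * g.1 + (-(2 * (deriv α₂ p.2.2))) * g.2.1
            + (2 * (deriv α₁ p.2.2) * (deriv α₁ p.2.2) + 2 * (α₁ p.2.2) * (deriv (deriv α₁) p.2.2) + (2 * (deriv α₂ p.2.2) * (deriv α₂ p.2.2) + 2 * (α₂ p.2.2) * (deriv (deriv α₂) p.2.2))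
                - (2 * (deriv r p.2.2) * (deriv r p.2.2) + 2 * (r p.2.2) * (deriv (deriv r) p.2.2))) * g.2.2)) * g.2.2 := by
    have := (pd_of_shape 0 0 _ _ _ _ _ _ _ hphi p haφ hbφ hcφ).2.2.2 g
    simpa [hessQ] using this
  -- constraint from F p = 0
  have hp' : (p.1 - (α₁ p.2.2)) * (p.1 - (α₁ p.2.2)) + (p.2.1 - (α₂ p.2.2)) * (p.2.1 - (α₂ p.2.2)) - (r p.2.2) * (r p.2.2) = 0 := by
    rw [hF] at hp
    simp only at hp
    linear_combination hp
  -- now everything is algebra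
  rw [show lip g g = g.1 * g.1 + g.2.1 * g.2.1 - g.2.2 * g.2.2 from rfl,
    show lapL F p = pd 0 (pd 0 F) p + pd 1 (pd 1 F) p - pd 2 (pd 2 F) p from rfl,
    hpd00, hpd11, hpd22, hhess, hg1, hg2, hg3, hpd2]
  constructor
  · intro h
    linear_combination (norm := ring_nf) (1/4 : ℝ) * h - (((-(2 * (deriv (deriv α₁) p.2.2))) * p.1 + (-(2 * (deriv (deriv α₂) p.2.2))) * p.2.1 + (2 * (deriv α₁ p.2.2) * (deriv α₁ p.2.2) + 2 * (α₁ p.2.2) * (deriv (deriv α₁) p.2.2) + (2 * (deriv α₂ p.2.2) * (deriv α₂ p.2.2) + 2 * (α₂ p.2.2) * (deriv (deriv α₂) p.2.2)) - (2 * (deriv r p.2.2) * (deriv r p.2.2) + 2 * (r p.2.2) * (deriv (deriv r) p.2.2)))) - 2) * hp'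
  · intro h
    linear_combination (norm := ring_nf) 4 * h + (4 * ((-(2 * (deriv (deriv α₁) p.2.2))) * p.1 + (-(2 * (deriv (deriv α₂) p.2.2))) * p.2.1 + (2 * (deriv α₁ p.2.2) * (deriv α₁ p.2.2) + 2 * (α₁ p.2.2) * (deriv (deriv α₁) p.2.2) + (2 * (deriv α₂ p.2.2) * (deriv α₂ p.2.2) + 2 * (α₂ p.2.2) * (deriv (deriv α₂) p.2.2)) - (2 * (deriv r p.2.2) * (deriv r p.2.2) + 2 * (r p.2.2) * (deriv (deriv r) p.2.2)))) - 8) * hp'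
end
end

section
/- Let q : I → (0,∞) be smooth, non-constant, and satisfy 2|a⃗|²q³ + (q')² − q(2 + q'') = 0 on an interval I, for a⃗ ∈ ℝ². Then there exists λ ∈ ℝ such that (q')²/q² = 4(|a⃗|²q + 1/q) + 4λ on I. -/
/-- First integral: a smooth non-constant positive solution of
2|a⃗|²q³ + (q')² − q(2 + q'') = 0 on an interval satisfies
(q')²/q² = 4(|a⃗|²q + 1/q) + 4λ for some constant λ. -/
theorem first_integral_exists
    (a : ℝ × ℝ) (x₀ x₁ : ℝ) (hI : x₀ < x₁)
    (q : ℝ → ℝ) (hq : ContDiff ℝ (⊤ : ℕ∞) q)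
    (hpos : ∀ z ∈ Set.Ioo x₀ x₁, 0 < q z)
    (hnonconst : ∃ z₁ ∈ Set.Ioo x₀ x₁, ∃ z₂ ∈ Set.Ioo x₀ x₁, q z₁ ≠ q z₂)
    (hODE : ∀ z ∈ Set.Ioo x₀ x₁,
      2 * (a.1^2 + a.2^2) * (q z)^3 + (deriv q z)^2
        - q z * (2 + deriv (deriv q) z) = 0) :
    ∃ lam : ℝ, ∀ z ∈ Set.Ioo x₀ x₁,
      (deriv q z)^2 / (q z)^2
        = 4 * ((a.1^2 + a.2^2) * q z + 1 / q z) + 4 * lam := by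
  set A : ℝ := a.1^2 + a.2^2 with hA
  set F : ℝ → ℝ := fun z => (deriv q z)^2 / (q z)^2 - 4 * (A * q z + 1 / q z) with hF
  have hq1 : Differentiable ℝ q := hq.differentiable (by simp)
  have hqi : ContDiff ℝ ((⊤ : ℕ∞) : WithTop ℕ∞) q := hq.of_le (by simp)
  have hq2 : Differentiable ℝ (deriv q) :=
    (contDiff_infty_iff_deriv.mp hqi).2.differentiable (by simp)
  have key : ∀ z ∈ Set.Ioo x₀ x₁, HasDerivAt F 0 z := by
    intro z hz
    have hqz : q z ≠ 0 := (hpos z hz).ne'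
    have h1 : HasDerivAt q (deriv q z) z := (hq1 z).hasDerivAt
    have h2 : HasDerivAt (deriv q) (deriv (deriv q) z) z := (hq2 z).hasDerivAt
    have hnum : HasDerivAt (fun z => (deriv q z)^2)
        (2 * deriv q z * deriv (deriv q) z) z := by
      have := h2.fun_pow 2
      simpa [mul_comm, mul_assoc, mul_left_comm] using this
    have hden : HasDerivAt (fun z => (q z)^2) (2 * q z * deriv q z) z := by
      have := h1.fun_pow 2
      simpa [mul_comm, mul_assoc, mul_left_comm] using this
    have hinv : HasDerivAt (fun z => 1 / q z) (-(deriv q z) / (q z)^2) z := by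
      have := h1.fun_inv hqz
      simpa [one_div, div_eq_mul_inv] using this
    have hdiv : HasDerivAt (fun z => (deriv q z)^2 / (q z)^2)
        ((2 * deriv q z * deriv (deriv q) z * (q z)^2
          - (deriv q z)^2 * (2 * q z * deriv q z)) / ((q z)^2)^2) z :=
      hnum.div hden (pow_ne_zero 2 hqz)
    have hlin : HasDerivAt (fun z => 4 * (A * q z + 1 / q z))
        (4 * (A * deriv q z + -(deriv q z) / (q z)^2)) z :=
      (((h1.const_mul A).add hinv)).const_mul 4
    have := hdiv.fun_sub hlin
    convert this using 1
    · exact rfl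
    · exact rfl
    have hODEz := hODE z hz
    field_simp
    linear_combination (2 * deriv q z) * hODEz
  obtain ⟨z₀, hz₀⟩ : ∃ z₀, z₀ ∈ Set.Ioo x₀ x₁ := ⟨(x₀ + x₁)/2, by constructor <;> linarith⟩
  refine ⟨F z₀ / 4, fun z hz => ?_⟩
  have hconst : F z = F z₀ := by
    have hconv : Convex ℝ (Set.Ioo x₀ x₁) := convex_Ioo x₀ x₁
    refine hconv.is_const_of_fderivWithin_eq_zero (fun y hy => ((key y hy).differentiableAt).differentiableWithinAt) (fun y hy => ?_) hz hz₀
    have hopen : IsOpen (Set.Ioo x₀ x₁) := isOpen_Ioo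
    rw [fderivWithin_of_isOpen hopen hy]
    have := (key y hy).hasFDerivAt.fderiv
    rw [this]
    ext
    simp
  have : F z = 4 * (F z₀ / 4) := by rw [hconst]; ring
  simpa [hF, sub_eq_iff_eq_add'] using this
end

section
/- Consider the surface X(r,v) = (−r + arctan r, 0, arctan r) + r(cos v, sin v, 0) for r > 0, v ∈ ℝ, in 𝕃³. Then: (i) its third coordinate satisfies 0 < x₃ < π/2; (ii) the first fundamental form determinant W = g₁₁g₂₂ − g₁₂² is positive (the surface is spacelike) if and only if cos v ≠ 1; (iii) the points with cos v = 1 parametrize the curve r ↦ arctan(r)·(1,0,1), which lies on a straight line with lightlike direction (1,0,1). -/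
noncomputable section

/-!
Write `u = 1/(1 + r²)` for the derivative of `arctan`, `c = cos v` and `s = sin v`. The partial
derivatives are `X_r = (c - 1 + u, s, u)` and `X_v = r(-s, c, 0)`, so `g₁₁ = 2(1 - u)(1 - c)`,
`g₁₂ = r s (1 - u)`, `g₂₂ = r²`, and with `s² = (1 - c)(1 + c)` this factors as
`W = r² (1 - u) (1 - c) ((1 - c) + u (1 + c))`. Since `0 < u < 1` and `-1 ≤ c ≤ 1`, every factor
but `1 - c` is positive. When `c = 1` also `s = 0`, leaving `X(r, v) = arctan r · (1, 0, 1)`.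
-/

open Real

def riemannSurface (r v : ℝ) : ℝ × ℝ × ℝ :=
  (-r + arctan r + r * cos v, r * sin v, arctan r)

theorem lip_gram_det_eq (r u c s : ℝ) (hsc : s ^ 2 + c ^ 2 = 1) :
    lip (-1 + u + c, s, u) (-1 + u + c, s, u) * lip (-(r * s), r * c, 0) (-(r * s), r * c, 0)
      - lip (-1 + u + c, s, u) (-(r * s), r * c, 0) ^ 2
      = r ^ 2 * (1 - u) * (1 - c) * ((1 - c) + u * (1 + c)) := by
  simp only [lip]
  linear_combination r ^ 2 * (s ^ 2 + c ^ 2 + 2 * (1 - u) * (1 - c) - (1 - u) ^ 2) * hsc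

theorem gram_det_factor_pos_iff {r u c : ℝ} (hr : r ≠ 0) (hu₀ : 0 < u) (hu₁ : u < 1)
    (hc₀ : -1 ≤ c) (hc₁ : c ≤ 1) :
    0 < r ^ 2 * (1 - u) * (1 - c) * ((1 - c) + u * (1 + c)) ↔ c ≠ 1 := by
  constructor
  · rintro hpos rfl
    simp at hpos
  · intro hc
    have h1c : 0 < 1 - c := sub_pos.2 (lt_of_le_of_ne hc₁ hc)
    have h1u : 0 < 1 - u := sub_pos.2 hu₁
    have hlast : 0 < (1 - c) + u * (1 + c) := by nlinarith
    positivity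

theorem hasDerivAt_riemannSurface_radial (r v : ℝ) :
    HasDerivAt (fun t => riemannSurface t v)
      (-1 + (1 + r ^ 2)⁻¹ + cos v, sin v, (1 + r ^ 2)⁻¹) r := by
  have hx := (hasDerivAt_id r).neg.add (hasDerivAt_arctan' r) |>.add
    ((hasDerivAt_id r).mul_const (cos v))
  have hy := (hasDerivAt_id r).mul_const (sin v)
  simpa [riemannSurface] using hx.prodMk (hy.prodMk (hasDerivAt_arctan' r))

theorem hasDerivAt_riemannSurface_angular (r v : ℝ) :
    HasDerivAt (fun t => riemannSurface r t) (-(r * sin v), r * cos v, 0) v := by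
  have hx := ((hasDerivAt_cos v).const_mul r).const_add (-r + arctan r)
  have hy := (hasDerivAt_sin v).const_mul r
  simpa [riemannSurface] using hx.prodMk (hy.prodMk (hasDerivAt_const v (arctan r)))

theorem riemannSurface_of_cos_eq_one {r v : ℝ} (hc : cos v = 1) :
    riemannSurface r v = arctan r • ((1 : ℝ), (0 : ℝ), (1 : ℝ)) := by
  have hs : sin v = 0 := sin_eq_zero_iff_cos_eq.2 (Or.inl hc)
  simp [riemannSurface, hc, hs]

/-- The explicit Riemann maximal example for λ = 2:
X(r,v) = (−r + arctan r, 0, arctan r) + r(cos v, sin v, 0), r > 0.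
(i) 0 < x₃ < π/2; (ii) W > 0 iff cos v ≠ 1; (iii) the points with cos v = 1
form the curve r ↦ arctan r·(1,0,1), lying on a line with lightlike
direction (1,0,1). -/
theorem explicit_riemann_maximal_lambda_two
    (X : ℝ → ℝ → ℝ × ℝ × ℝ)
    (hX : X = fun r v =>
      (-r + Real.arctan r + r * Real.cos v, r * Real.sin v, Real.arctan r)) :
    ∀ r v : ℝ, 0 < r →
      (0 < (X r v).2.2 ∧ (X r v).2.2 < Real.pi / 2) ∧
      (lip (deriv (fun t => X t v) r) (deriv (fun t => X t v) r)
          * lip (deriv (fun t => X r t) v) (deriv (fun t => X r t) v)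
        - (lip (deriv (fun t => X t v) r) (deriv (fun t => X r t) v))^2 > 0 ↔
        Real.cos v ≠ 1) ∧
      (Real.cos v = 1 → X r v = Real.arctan r • ((1:ℝ), (0:ℝ), (1:ℝ))) ∧
      lip ((1:ℝ), (0:ℝ), (1:ℝ)) ((1:ℝ), (0:ℝ), (1:ℝ)) = 0 := by
  obtain rfl : X = riemannSurface := hX
  intro r v hr
  have hu₀ : 0 < (1 + r ^ 2)⁻¹ := by positivity
  have hu₁ : (1 + r ^ 2)⁻¹ < 1 := inv_lt_one_of_one_lt₀ (by nlinarith)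
  refine ⟨⟨arctan_pos.2 hr, arctan_lt_pi_div_two r⟩, ?_, riemannSurface_of_cos_eq_one,
    by norm_num [lip]⟩
  rw [(hasDerivAt_riemannSurface_radial r v).deriv, (hasDerivAt_riemannSurface_angular r v).deriv,
    lip_gram_det_eq r _ _ _ (sin_sq_add_cos_sq v)]
  exact gram_det_factor_pos_iff hr.ne' hu₀ hu₁ (neg_one_le_cos v) (cos_le_one v)
end
end

section
/- Let λ ∈ ℝ with λ > 2, and let q > 0, v ∈ ℝ. Then (1+cos²v)·q − 2cos v·√(q² + λq + 1) + λ > 0. In particular, the Riemann minimal example with parameter λ > 2 foliated by circles in parallel spacelike planes is spacelike at every point. -/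
/-! Squaring is legitimate because the right-hand side `(1 + c²) q + λ` is positive, and
`((1 + c²) q + λ)² - 4 c² (q² + λ q + 1) = ((1 - c²) q)² + 2 λ (1 - c²) q + (λ² - 4 c²)`,
where each summand is nonnegative for `c² ≤ 1`, `q ≥ 0` and the last is positive once `λ > 2`. -/

namespace Real

lemma four_mul_sq_mul_lt_sq {c q lam : ℝ} (hc : c ^ 2 ≤ 1) (hq : 0 ≤ q) (hlam : 2 < lam) :
    4 * c ^ 2 * (q ^ 2 + lam * q + 1) < ((1 + c ^ 2) * q + lam) ^ 2 := by
  have hdiff : ((1 + c ^ 2) * q + lam) ^ 2 - 4 * c ^ 2 * (q ^ 2 + lam * q + 1)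
      = ((1 - c ^ 2) * q) ^ 2 + 2 * lam * (1 - c ^ 2) * q + (lam ^ 2 - 4 * c ^ 2) := by
    ring
  have hmid : 0 ≤ 2 * lam * (1 - c ^ 2) * q := by
    have : 0 ≤ 1 - c ^ 2 := by linarith
    positivity
  nlinarith [sq_nonneg ((1 - c ^ 2) * q)]

lemma two_mul_mul_sqrt_lt {c q lam : ℝ} (hc : c ^ 2 ≤ 1) (hq : 0 ≤ q) (hlam : 2 < lam) :
    2 * c * √(q ^ 2 + lam * q + 1) < (1 + c ^ 2) * q + lam := by
  have hpos : 0 < (1 + c ^ 2) * q + lam := by positivity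
  calc 2 * c * √(q ^ 2 + lam * q + 1)
      ≤ |2 * c * √(q ^ 2 + lam * q + 1)| := le_abs_self _
    _ = √(4 * c ^ 2 * (q ^ 2 + lam * q + 1)) := by
        rw [sqrt_mul' _ (by positivity), show 4 * c ^ 2 = (2 * c) ^ 2 by ring, sqrt_sq_eq_abs,
          abs_mul, abs_of_nonneg (sqrt_nonneg _)]
    _ < (1 + c ^ 2) * q + lam := (sqrt_lt' hpos).2 (four_mul_sq_mul_lt_sq hc hq hlam)

end Real

/-- For λ > 2 the spacelike condition holds everywhere:
(1+cos²v)q − 2cos v·√(q²+λq+1) + λ > 0 for all q > 0 and v ∈ ℝ. -/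
theorem spacelike_for_lambda_gt_two (lam q v : ℝ) (hlam : 2 < lam) (hq : 0 < q) :
    (1 + (Real.cos v)^2) * q - 2 * Real.cos v * Real.sqrt (q^2 + lam*q + 1) + lam > 0 := by
  have := Real.two_mul_mul_sqrt_lt (Real.cos_sq_le_one v) hq.le hlam
  linarith
end

section
/- Let F(x,y) = (x₂−α₂(x))² − (x₃−α₃(x))² + r(x)², describing a surface in 𝕃³ foliated by spacelike hyperbolas of radius r(x) > 0 in the planes x₁ = x. Then the zero mean curvature equation −⟨∇ᴸF,∇ᴸF⟩ΔᴸF + Hess F(∇ᴸF,∇ᴸF) = 0 on F = 0 is equivalent to F_x² − r²(2 + F_{xx}) + 2F_x⟨y−α, α'⟩ = 0, where y = (x₂,x₃), α = (α₂,α₃), and ⟨(u₂,u₃),(w₂,w₃)⟩ = u₂w₂ − u₃w₃. -/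
noncomputable section

open ContinuousLinearMap
open scoped ContDiff

def P1 : (ℝ × ℝ × ℝ) →L[ℝ] ℝ := fst ℝ ℝ (ℝ × ℝ)
def P2 : (ℝ × ℝ × ℝ) →L[ℝ] ℝ := (fst ℝ ℝ ℝ).comp (snd ℝ ℝ (ℝ × ℝ))
def P3 : (ℝ × ℝ × ℝ) →L[ℝ] ℝ := (snd ℝ ℝ ℝ).comp (snd ℝ ℝ (ℝ × ℝ))

def famL (a b c : ℝ) : (ℝ × ℝ × ℝ) →L[ℝ] ℝ := a • P1 + b • P2 + c • P3

lemma famL_apply (a b c : ℝ) (w : ℝ × ℝ × ℝ) :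
    famL a b c w = a * w.1 + b * w.2.1 + c * w.2.2 := by
  simp [famL, P1, P2, P3, smul_eq_mul]

def fam (A B C D E : ℝ → ℝ) : (ℝ × ℝ × ℝ) → ℝ :=
  fun q => A q.1 + B q.1 * q.2.1 + C q.1 * q.2.2 + D q.1 * q.2.1 ^ 2 + E q.1 * q.2.2 ^ 2

lemma fam_hasFDerivAt (A B C D E : ℝ → ℝ) (hA : ContDiff ℝ ∞ A) (hB : ContDiff ℝ ∞ B)
    (hC : ContDiff ℝ ∞ C) (hD : ContDiff ℝ ∞ D) (hE : ContDiff ℝ ∞ E) (p : ℝ × ℝ × ℝ) :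
    HasFDerivAt (fam A B C D E)
      (famL (deriv A p.1 + deriv B p.1 * p.2.1 + deriv C p.1 * p.2.2
              + deriv D p.1 * p.2.1 ^ 2 + deriv E p.1 * p.2.2 ^ 2)
            (B p.1 + 2 * D p.1 * p.2.1)
            (C p.1 + 2 * E p.1 * p.2.2)) p := by
  have h1 : HasFDerivAt (fun q : ℝ × ℝ × ℝ => q.1) P1 p := hasFDerivAt_fst
  have h2 : HasFDerivAt (fun q : ℝ × ℝ × ℝ => q.2.1) P2 p :=
    hasFDerivAt_fst.comp p hasFDerivAt_snd
  have h3 : HasFDerivAt (fun q : ℝ × ℝ × ℝ => q.2.2) P3 p :=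
    hasFDerivAt_snd.comp p hasFDerivAt_snd
  have hAd : HasFDerivAt (fun q : ℝ × ℝ × ℝ => A q.1) ((deriv A p.1) • P1) p :=
    (hA.differentiable (by simp) p.1).hasDerivAt.comp_hasFDerivAt p h1
  have hBd : HasFDerivAt (fun q : ℝ × ℝ × ℝ => B q.1) ((deriv B p.1) • P1) p :=
    (hB.differentiable (by simp) p.1).hasDerivAt.comp_hasFDerivAt p h1
  have hCd : HasFDerivAt (fun q : ℝ × ℝ × ℝ => C q.1) ((deriv C p.1) • P1) p :=
    (hC.differentiable (by simp) p.1).hasDerivAt.comp_hasFDerivAt p h1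
  have hDd : HasFDerivAt (fun q : ℝ × ℝ × ℝ => D q.1) ((deriv D p.1) • P1) p :=
    (hD.differentiable (by simp) p.1).hasDerivAt.comp_hasFDerivAt p h1
  have hEd : HasFDerivAt (fun q : ℝ × ℝ × ℝ => E q.1) ((deriv E p.1) • P1) p :=
    (hE.differentiable (by simp) p.1).hasDerivAt.comp_hasFDerivAt p h1
  have h2sq : HasFDerivAt (fun q : ℝ × ℝ × ℝ => q.2.1 ^ 2)
      ((p.2.1 : ℝ) • P2 + (p.2.1 : ℝ) • P2) p := by
    rw [show (fun q : ℝ × ℝ × ℝ => q.2.1 ^ 2) = (fun q => q.2.1) * (fun q => q.2.1) from by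
      funext q; simp [pow_two]]
    exact h2.mul h2
  have h3sq : HasFDerivAt (fun q : ℝ × ℝ × ℝ => q.2.2 ^ 2)
      ((p.2.2 : ℝ) • P3 + (p.2.2 : ℝ) • P3) p := by
    rw [show (fun q : ℝ × ℝ × ℝ => q.2.2 ^ 2) = (fun q => q.2.2) * (fun q => q.2.2) from by
      funext q; simp [pow_two]]
    exact h3.mul h3
  have hT := (((hAd.add (hBd.mul h2)).add (hCd.mul h3)).add (hDd.mul h2sq)).add (hEd.mul h3sq)
  have hT' : HasFDerivAt (fam A B C D E) _ p := hT
  refine hT'.congr_fderiv ?_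
  apply ContinuousLinearMap.ext
  intro w
  simp [famL_apply, famL, P1, P2, P3, smul_eq_mul]
  ring

lemma fam_fderiv_apply (A B C D E : ℝ → ℝ) (hA : ContDiff ℝ ∞ A) (hB : ContDiff ℝ ∞ B)
    (hC : ContDiff ℝ ∞ C) (hD : ContDiff ℝ ∞ D) (hE : ContDiff ℝ ∞ E) (p w : ℝ × ℝ × ℝ) :
    fderiv ℝ (fam A B C D E) p w =
      (deriv A p.1 + deriv B p.1 * p.2.1 + deriv C p.1 * p.2.2
        + deriv D p.1 * p.2.1 ^ 2 + deriv E p.1 * p.2.2 ^ 2) * w.1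
      + (B p.1 + 2 * D p.1 * p.2.1) * w.2.1 + (C p.1 + 2 * E p.1 * p.2.2) * w.2.2 := by
  rw [(fam_hasFDerivAt A B C D E hA hB hC hD hE p).fderiv, famL_apply]


/-- Lorentzian inner product on the timelike plane x₁ = 0: ⟨u,w⟩ = u₂w₂ − u₃w₃. -/
def lip2 (u w : ℝ × ℝ) : ℝ := u.1 * w.1 - u.2 * w.2

lemma neg4_iff {a b : ℝ} (h : a = -4 * b) : a = 0 ↔ b = 0 := by
  constructor <;> intro h' <;> linarith

lemma pd0_eq (f : ℝ × ℝ × ℝ → ℝ) (p : ℝ × ℝ × ℝ) : pd 0 f p = fderiv ℝ f p (1,0,0) := rfl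
lemma pd1_eq (f : ℝ × ℝ × ℝ → ℝ) (p : ℝ × ℝ × ℝ) : pd 1 f p = fderiv ℝ f p (0,1,0) := rfl
lemma pd2_eq (f : ℝ × ℝ × ℝ → ℝ) (p : ℝ × ℝ × ℝ) : pd 2 f p = fderiv ℝ f p (0,0,1) := rfl


/-- For F(x,y) = (x₂−α₂(x))² − (x₃−α₃(x))² + r(x)², on F = 0 the zero mean
curvature equation is equivalent to F_x² − r²(2 + F_{xx}) + 2F_x⟨y−α,α'⟩ = 0,
with the Lorentzian inner product ⟨u,w⟩ = u₂w₂ − u₃w₃. -/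
theorem spacelike_hyperbolas_in_timelike_planes_equation
    (α₂ α₃ r : ℝ → ℝ) (hα₂ : ContDiff ℝ (⊤ : ℕ∞) α₂) (hα₃ : ContDiff ℝ (⊤ : ℕ∞) α₃)
    (hr : ContDiff ℝ (⊤ : ℕ∞) r) (hrpos : ∀ x, 0 < r x)
    (F : ℝ × ℝ × ℝ → ℝ)
    (hF : F = fun p => (p.2.1 - α₂ p.1)^2 - (p.2.2 - α₃ p.1)^2 + (r p.1)^2)
    (p : ℝ × ℝ × ℝ) (hp : F p = 0) :
    (-(lip (gradL F p) (gradL F p)) * lapL F p + hessQ F p (gradL F p) = 0) ↔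
      (pd 0 F p)^2 - (r p.1)^2 * (2 + pd 0 (pd 0 F) p)
        + 2 * pd 0 F p *
          lip2 (p.2.1 - α₂ p.1, p.2.2 - α₃ p.1) (deriv α₂ p.1, deriv α₃ p.1) = 0 := by
  have hα₂' : ContDiff ℝ ∞ α₂ := hα₂.of_le (by simp)
  have hα₃' : ContDiff ℝ ∞ α₃ := hα₃.of_le (by simp)
  have hr'' : ContDiff ℝ ∞ r := hr.of_le (by simp)
  have hp' : (p.2.1 - α₂ p.1)^2 - (p.2.2 - α₃ p.1)^2 + (r p.1)^2 = 0 := by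
    rw [hF] at hp; exact hp
  set A : ℝ → ℝ := fun t => α₂ t * α₂ t - α₃ t * α₃ t + r t * r t with hAdef
  set B : ℝ → ℝ := fun t => (-2) * α₂ t with hBdef
  set C : ℝ → ℝ := fun t => 2 * α₃ t with hCdef
  set Z : ℝ → ℝ := fun _ => (0:ℝ) with hZdef
  have hAc : ContDiff ℝ ∞ A := ((hα₂'.mul hα₂').sub (hα₃'.mul hα₃')).add (hr''.mul hr'')
  have hBc : ContDiff ℝ ∞ B := contDiff_const.mul hα₂'
  have hCc : ContDiff ℝ ∞ C := contDiff_const.mul hα₃'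
  have hZc : ContDiff ℝ ∞ Z := contDiff_const
  have hcc : ∀ c : ℝ, ContDiff ℝ ∞ (fun _ : ℝ => c) := fun c => contDiff_const
  have hdA : ContDiff ℝ ∞ (deriv A) := (contDiff_infty_iff_deriv.mp hAc).2
  have hdB : ContDiff ℝ ∞ (deriv B) := (contDiff_infty_iff_deriv.mp hBc).2
  have hdC : ContDiff ℝ ∞ (deriv C) := (contDiff_infty_iff_deriv.mp hCc).2
  have hFeq : F = fam A B C (fun _ => 1) (fun _ => -1) := by
    rw [hF]; funext q; simp only [fam]; ring
  -- first partials as fam functions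
  have hpd0 : pd 0 F = fam (deriv A) (deriv B) (deriv C) Z Z := by
    funext q
    simp only [pd0_eq, hFeq]
    rw [fam_fderiv_apply A B C _ _ hAc hBc hCc (hcc 1) (hcc (-1)) q (1,0,0)]
    simp [fam, hZdef, deriv_const']
    try ring
  have hpd1 : pd 1 F = fam B (fun _ => 2) Z Z Z := by
    funext q
    simp only [pd1_eq, hFeq]
    rw [fam_fderiv_apply A B C _ _ hAc hBc hCc (hcc 1) (hcc (-1)) q (0,1,0)]
    simp [fam, hZdef, deriv_const']
    try ring
  have hpd2 : pd 2 F = fam C Z (fun _ => -2) Z Z := by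
    funext q
    simp only [pd2_eq, hFeq]
    rw [fam_fderiv_apply A B C _ _ hAc hBc hCc (hcc 1) (hcc (-1)) q (0,0,1)]
    simp [fam, hZdef, deriv_const']
    try ring
  -- second partials
  have hpd00 : pd 0 (pd 0 F) p
      = deriv (deriv A) p.1 + deriv (deriv B) p.1 * p.2.1 + deriv (deriv C) p.1 * p.2.2 := by
    rw [hpd0]
    rw [pd0_eq, fam_fderiv_apply _ _ _ _ _ hdA hdB hdC hZc hZc p (1,0,0)]
    simp [hZdef, deriv_const']
    try ring
  have hpd11 : pd 1 (pd 1 F) p = 2 := by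
    rw [hpd1]
    rw [pd1_eq, fam_fderiv_apply _ _ _ _ _ hBc (hcc 2) hZc hZc hZc p (0,1,0)]
    simp [hZdef, deriv_const']
    try ring
  have hpd22 : pd 2 (pd 2 F) p = -2 := by
    rw [hpd2]
    rw [pd2_eq, fam_fderiv_apply _ _ _ _ _ hCc hZc (hcc (-2)) hZc hZc p (0,0,1)]
    simp [hZdef, deriv_const']
    try ring
  -- hessQ for an arbitrary fixed vector g
  have hhess : ∀ g : ℝ × ℝ × ℝ, hessQ F p g =
      g.1 * ((deriv (deriv A) p.1 + deriv (deriv B) p.1 * p.2.1 + deriv (deriv C) p.1 * p.2.2) * g.1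
              + deriv B p.1 * g.2.1 + deriv C p.1 * g.2.2)
      + g.2.1 * (deriv B p.1 * g.1 + 2 * g.2.1)
      + g.2.2 * (deriv C p.1 * g.1 + (-2) * g.2.2) := by
    intro g
    have hfun : (fun q => fderiv ℝ F q g)
        = fun q => fam (deriv A) (deriv B) (deriv C) Z Z q * g.1
            + fam B (fun _ => 2) Z Z Z q * g.2.1
            + fam C Z (fun _ => -2) Z Z q * g.2.2 := by
      funext q
      rw [hFeq, fam_fderiv_apply A B C _ _ hAc hBc hCc (hcc 1) (hcc (-1)) q g]
      simp only [fam, hZdef, deriv_const']; ring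
    have h0 := fam_hasFDerivAt _ _ _ _ _ hdA hdB hdC hZc hZc p
    have h1 := fam_hasFDerivAt _ _ _ _ _ hBc (hcc 2) hZc hZc hZc p
    have h2 := fam_hasFDerivAt _ _ _ _ _ hCc hZc (hcc (-2)) hZc hZc p
    have hT := ((h0.mul_const g.1).add (h1.mul_const g.2.1)).add (h2.mul_const g.2.2)
    have hT' : HasFDerivAt (fun q => fam (deriv A) (deriv B) (deriv C) Z Z q * g.1
        + fam B (fun _ => 2) Z Z Z q * g.2.1 + fam C Z (fun _ => -2) Z Z q * g.2.2) _ p := hT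
    rw [hessQ, hfun, hT'.fderiv]
    simp only [ContinuousLinearMap.add_apply, ContinuousLinearMap.smul_apply, famL_apply,
      smul_eq_mul, hZdef, deriv_const']
    ring
  -- gradient components
  have hdBv : deriv B p.1 = -2 * deriv α₂ p.1 := by
    rw [hBdef]; rw [deriv_const_mul _ (hα₂.differentiable (by simp) p.1)]
  have hdCv : deriv C p.1 = 2 * deriv α₃ p.1 := by
    rw [hCdef]; rw [deriv_const_mul _ (hα₃.differentiable (by simp) p.1)]
  have hg0 : pd 1 F p = -2 * α₂ p.1 + 2 * p.2.1 := by
    rw [hpd1]; simp [fam, hZdef, hBdef]; try ring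
  have hg1 : pd 2 F p = 2 * α₃ p.1 + (-2) * p.2.2 := by
    rw [hpd2]; simp [fam, hZdef, hCdef]; try ring
  have hFx : pd 0 F p = deriv A p.1 + (-2 * deriv α₂ p.1) * p.2.1 + (2 * deriv α₃ p.1) * p.2.2 := by
    rw [hpd0]; simp [fam, hZdef, hdBv, hdCv]; try ring
  -- assemble
  rw [lapL, hpd00, hpd11, hpd22, gradL, lip]
  rw [hhess]
  simp only [hg0, hg1, hFx, lip2, hdBv, hdCv]
  apply neg4_iff
  linear_combination (-4 * (deriv (deriv A) p.1 + deriv (deriv B) p.1 * p.2.1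
      + deriv (deriv C) p.1 * p.2.2 + 2)) * hp'
end
end

section
/- For λ > 0, the functions x(r) = (1/√λ)·arcosh(√λ·r) and m(r) = (√λ·r·√(λr² − 1) + arsinh(√(λr² − 1)))/(2λ^{3/2}), defined for r > 1/√λ, satisfy, with q = r², x(q) = (1/2)∫_{1/λ}^q du/√(λu² − u) and m(q) = (1/2)∫_{1/λ}^q u du/√(λu² − u). -/
open Real MeasureTheory intervalIntegral Set

private lemma aux_integrable (lam q : ℝ) (hlam : 0 < lam) (hq : 1 / lam < q) (C : ℝ)
    (f : ℝ → ℝ) (hm : Measurable f)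
    (hb : ∀ u ∈ Set.Ioc (1/lam) q, |f u| ≤ C * (u - 1/lam) ^ (-(1/2) : ℝ)) :
    IntervalIntegrable f volume (1/lam) q := by
  have hbase : IntervalIntegrable (fun x : ℝ => C * x ^ (-(1/2) : ℝ)) volume 0 (q - 1/lam) :=
    (intervalIntegrable_rpow' (by norm_num)).const_mul C
  have hshift : IntervalIntegrable (fun x : ℝ => C * (x - 1/lam) ^ (-(1/2) : ℝ))
      volume (1/lam) q := by
    have := hbase.comp_sub_right (1/lam)
    simpa using this
  refine hshift.mono_fun' hm.aestronglyMeasurable.restrict ?_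
  rw [Filter.EventuallyLE, ae_restrict_iff' measurableSet_uIoc]
  refine Filter.Eventually.of_forall (fun u hu => ?_)
  rw [Set.uIoc_of_le hq.le] at hu
  simpa using hb u hu

/-- Explicit quadratures for a⃗ = (1,1), λ > 0 (timelike hyperbolas in
timelike planes): with q > 1/λ,
(1/√λ)·arcosh(√(λq)) = (1/2)∫_{1/λ}^q du/√(λu²−u) and
(√λ·√q·√(λq−1) + arsinh √(λq−1))/(2λ^{3/2}) = (1/2)∫_{1/λ}^q u du/√(λu²−u),
where arcosh x = log(x + √(x²−1)). -/
theorem lightlike_direction_quadratures (lam : ℝ) (hlam : 0 < lam)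
    (q : ℝ) (hq : 1 / lam < q) :
    ((1 / Real.sqrt lam) *
        Real.log (Real.sqrt (lam * q) + Real.sqrt (lam * q - 1))
      = (1/2) * ∫ u in (1/lam)..q, 1 / Real.sqrt (lam * u^2 - u)) ∧
    ((Real.sqrt lam * Real.sqrt q * Real.sqrt (lam * q - 1)
        + Real.arsinh (Real.sqrt (lam * q - 1))) / (2 * lam^((3:ℝ)/2))
      = (1/2) * ∫ u in (1/lam)..q, u / Real.sqrt (lam * u^2 - u)) := by
  have ha0 : (0:ℝ) < 1/lam := by positivity
  have hq0 : 0 < q := ha0.trans hq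
  have hsl : 0 < Real.sqrt lam := Real.sqrt_pos.mpr hlam
  -- basic facts for u > 1/lam
  have key : ∀ u : ℝ, 1/lam < u →
      1 < lam * u ∧ 0 < u ∧ 0 < lam * u^2 - u ∧ u - 1/lam ≤ lam * u^2 - u := by
    intro u hu
    have hu0 : 0 < u := ha0.trans hu
    have h1 : 1 < lam * u := by
      rw [div_lt_iff₀ hlam] at hu; linarith [mul_comm u lam]
    refine ⟨h1, hu0, by nlinarith, ?_⟩
    have : 0 ≤ (lam * u - 1)^2 / lam := by positivity
    have h2 : (lam*u - 1)^2 / lam = (lam * u^2 - u) - (u - 1/lam) := by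
      field_simp
    linarith [h2 ▸ this]
  -- bound for the integrands
  have bound : ∀ C : ℝ, 0 ≤ C → ∀ u ∈ Set.Ioc (1/lam) q, ∀ v : ℝ, |v| ≤ C →
      |v / Real.sqrt (lam * u^2 - u)| ≤ C * (u - 1/lam) ^ (-(1/2) : ℝ) := by
    intro C hC u hu v hv
    obtain ⟨h1, hu0, hpos, hle⟩ := key u hu.1
    have hd0 : 0 < u - 1/lam := by linarith [hu.1]
    have hs1 : Real.sqrt (u - 1/lam) ≤ Real.sqrt (lam * u^2 - u) := Real.sqrt_le_sqrt hle
    have hs2 : 0 < Real.sqrt (u - 1/lam) := Real.sqrt_pos.mpr hd0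
    have hrw : (u - 1/lam) ^ (-(1/2) : ℝ) = (Real.sqrt (u - 1/lam))⁻¹ := by
      rw [Real.rpow_neg hd0.le, Real.sqrt_eq_rpow]
    rw [hrw, abs_div]
    rw [abs_of_nonneg (Real.sqrt_nonneg _)]
    calc |v| / Real.sqrt (lam * u^2 - u) ≤ C / Real.sqrt (u - 1/lam) := by
          apply div_le_div₀ hC hv hs2 hs1
      _ = C * (Real.sqrt (u - 1/lam))⁻¹ := div_eq_mul_inv _ _
  -- integrability
  have hmeas : Measurable (fun u : ℝ => Real.sqrt (lam * u^2 - u)) :=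
    Real.continuous_sqrt.measurable.comp (by fun_prop)
  have hint1 : IntervalIntegrable (fun u => 1 / Real.sqrt (lam * u^2 - u)) volume (1/lam) q := by
    refine aux_integrable lam q hlam hq 1 _ (measurable_const.div hmeas) ?_
    intro u hu
    simpa using bound 1 zero_le_one u hu 1 (by norm_num)
  have hint2 : IntervalIntegrable (fun u => u / Real.sqrt (lam * u^2 - u)) volume (1/lam) q := by
    refine aux_integrable lam q hlam hq q _ (measurable_id.div hmeas) ?_
    intro u hu
    refine bound q hq0.le u hu u ?_
    rw [abs_of_nonneg (ha0.trans hu.1).le]; exact hu.2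
  -- the two antiderivatives
  set F : ℝ → ℝ := fun u => (1 / Real.sqrt lam) *
      Real.log (Real.sqrt (lam * u) + Real.sqrt (lam * u - 1)) with hF
  set G : ℝ → ℝ := fun u => (Real.sqrt lam * Real.sqrt u * Real.sqrt (lam * u - 1)
      + Real.arsinh (Real.sqrt (lam * u - 1))) / (2 * lam^((3:ℝ)/2)) with hG
  -- continuity
  have hcontF : ContinuousOn F (Set.Icc (1/lam) q) := by
    apply ContinuousOn.mul continuousOn_const
    apply ContinuousOn.log
    · exact ((Real.continuous_sqrt.comp (by fun_prop)).add
        (Real.continuous_sqrt.comp (by fun_prop))).continuousOn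
    · intro u hu
      have h1 : 1 ≤ lam * u := by
        have h := (div_le_iff₀ hlam).mp hu.1; linarith [mul_comm u lam]
      have : (1:ℝ) ≤ Real.sqrt (lam * u) := by
        rw [show (1:ℝ) = Real.sqrt 1 from (Real.sqrt_one).symm]
        exact Real.sqrt_le_sqrt h1
      have := Real.sqrt_nonneg (lam * u - 1)
      positivity
  have hcontG : ContinuousOn G (Set.Icc (1/lam) q) := by
    apply ContinuousOn.div_const
    apply ContinuousOn.add
    · exact (((continuous_const.mul Real.continuous_sqrt).mul
        (Real.continuous_sqrt.comp (by fun_prop))).continuousOn)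
    · exact (Real.continuous_arsinh.comp
        (Real.continuous_sqrt.comp (by fun_prop))).continuousOn
  -- derivatives
  have hderivF : ∀ u ∈ Set.Ioo (1/lam) q,
      HasDerivAt F ((1/2) * (1 / Real.sqrt (lam * u^2 - u))) u := by
    intro u hu
    obtain ⟨h1, hu0, hpos, -⟩ := key u hu.1
    have hlu : 0 < lam * u := by linarith
    have hlu1 : 0 < lam * u - 1 := by linarith
    have hA : HasDerivAt (fun u : ℝ => Real.sqrt (lam * u))
        (lam / (2 * Real.sqrt (lam * u))) u := by
      have h : HasDerivAt (fun u : ℝ => lam * u) lam u := by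
        simpa using (hasDerivAt_id u).const_mul lam
      exact h.sqrt hlu.ne'
    have hB : HasDerivAt (fun u : ℝ => Real.sqrt (lam * u - 1))
        (lam / (2 * Real.sqrt (lam * u - 1))) u := by
      have h : HasDerivAt (fun u : ℝ => lam * u - 1) lam u := by
        simpa using ((hasDerivAt_id u).const_mul lam).sub_const 1
      exact h.sqrt hlu1.ne'
    have hs1 : 0 < Real.sqrt (lam * u) := Real.sqrt_pos.mpr hlu
    have hs2 : 0 < Real.sqrt (lam * u - 1) := Real.sqrt_pos.mpr hlu1
    have hsum : 0 < Real.sqrt (lam * u) + Real.sqrt (lam * u - 1) := by positivity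
    have hL : HasDerivAt F ((1 / Real.sqrt lam) *
        ((lam / (2 * Real.sqrt (lam * u)) + lam / (2 * Real.sqrt (lam * u - 1))) /
          (Real.sqrt (lam * u) + Real.sqrt (lam * u - 1)))) u :=
      ((hA.add hB).log hsum.ne').const_mul _
    convert hL using 1
    have e1 : Real.sqrt (lam * u) = Real.sqrt lam * Real.sqrt u := Real.sqrt_mul hlam.le u
    have e2 : Real.sqrt (lam * u^2 - u) = Real.sqrt u * Real.sqrt (lam * u - 1) := by
      rw [show lam * u^2 - u = u * (lam * u - 1) by ring, Real.sqrt_mul hu0.le]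
    have hsu : 0 < Real.sqrt u := Real.sqrt_pos.mpr hu0
    have q1 : Real.sqrt lam ^ 2 = lam := Real.sq_sqrt hlam.le
    have q2 : Real.sqrt u ^ 2 = u := Real.sq_sqrt hu0.le
    have q3 : Real.sqrt (lam * u - 1) ^ 2 = lam * u - 1 := Real.sq_sqrt hlu1.le
    rw [e2, e1]
    rw [e1] at hsum
    field_simp
    linear_combination (Real.sqrt u * Real.sqrt lam + Real.sqrt (lam*u-1)) * q1
  have hderivG : ∀ u ∈ Set.Ioo (1/lam) q,
      HasDerivAt G ((1/2) * (u / Real.sqrt (lam * u^2 - u))) u := by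
    intro u hu
    obtain ⟨h1, hu0, hpos, -⟩ := key u hu.1
    have hlu : 0 < lam * u := by linarith
    have hlu1 : 0 < lam * u - 1 := by linarith
    have hsu : 0 < Real.sqrt u := Real.sqrt_pos.mpr hu0
    have hs2 : 0 < Real.sqrt (lam * u - 1) := Real.sqrt_pos.mpr hlu1
    have hB : HasDerivAt (fun u : ℝ => Real.sqrt (lam * u - 1))
        (lam / (2 * Real.sqrt (lam * u - 1))) u := by
      have h : HasDerivAt (fun u : ℝ => lam * u - 1) lam u := by
        simpa using ((hasDerivAt_id u).const_mul lam).sub_const 1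
      exact h.sqrt hlu1.ne'
    have hC : HasDerivAt (fun u : ℝ => Real.sqrt lam * Real.sqrt u)
        (Real.sqrt lam * (1 / (2 * Real.sqrt u))) u :=
      (Real.hasDerivAt_sqrt hu0.ne').const_mul _
    have hprod : HasDerivAt (fun u : ℝ => Real.sqrt lam * Real.sqrt u * Real.sqrt (lam*u-1))
        (Real.sqrt lam * (1 / (2 * Real.sqrt u)) * Real.sqrt (lam*u-1)
          + Real.sqrt lam * Real.sqrt u * (lam / (2 * Real.sqrt (lam*u-1)))) u := hC.mul hB
    have harsinh : HasDerivAt (fun u : ℝ => Real.arsinh (Real.sqrt (lam*u-1)))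
        ((Real.sqrt (1 + Real.sqrt (lam*u-1)^2))⁻¹ • (lam / (2 * Real.sqrt (lam*u-1)))) u :=
      hB.arsinh
    have hL : HasDerivAt G
        ((Real.sqrt lam * (1 / (2 * Real.sqrt u)) * Real.sqrt (lam*u-1)
          + Real.sqrt lam * Real.sqrt u * (lam / (2 * Real.sqrt (lam*u-1)))
          + (Real.sqrt (1 + Real.sqrt (lam*u-1)^2))⁻¹ • (lam / (2 * Real.sqrt (lam*u-1))))
          / (2 * lam^((3:ℝ)/2))) u := (hprod.add harsinh).div_const _
    convert hL using 1
    have q3 : Real.sqrt (lam * u - 1) ^ 2 = lam * u - 1 := Real.sq_sqrt hlu1.le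
    have e3 : (1 : ℝ) + Real.sqrt (lam*u-1)^2 = lam * u := by rw [q3]; ring
    have e1 : Real.sqrt (lam * u) = Real.sqrt lam * Real.sqrt u := Real.sqrt_mul hlam.le u
    have e2 : Real.sqrt (lam * u^2 - u) = Real.sqrt u * Real.sqrt (lam * u - 1) := by
      rw [show lam * u^2 - u = u * (lam * u - 1) by ring, Real.sqrt_mul hu0.le]
    have e4 : lam ^ ((3:ℝ)/2) = lam * Real.sqrt lam := by
      rw [show (3:ℝ)/2 = 1 + 1/2 by norm_num, Real.rpow_add hlam, Real.rpow_one,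
        Real.sqrt_eq_rpow]
    have q1 : Real.sqrt lam ^ 2 = lam := Real.sq_sqrt hlam.le
    have q2 : Real.sqrt u ^ 2 = u := Real.sq_sqrt hu0.le
    rw [e2, e3, e1, e4, smul_eq_mul]
    field_simp
    have q3' : Real.sqrt (u * lam - 1) ^ 2 = u * lam - 1 := Real.sq_sqrt (by linarith)
    congr 1
    linear_combination (-Real.sqrt lam ^ 2) * q3' + (-Real.sqrt lam ^ 2 * lam) * q2 + q1
  -- values at endpoints
  have hFa : F (1/lam) = 0 := by
    have h1 : lam * (1/lam) = 1 := by field_simp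
    simp only [hF]; rw [h1]; norm_num
  have hGa : G (1/lam) = 0 := by
    have h1 : lam * (1/lam) = 1 := by field_simp
    simp only [hG]; rw [h1]; norm_num
  -- FTC
  have ftc1 : (∫ u in (1/lam)..q, (1/2) * (1 / Real.sqrt (lam * u^2 - u))) = F q - F (1/lam) :=
    intervalIntegral.integral_eq_sub_of_hasDeriv_right_of_le hq.le hcontF
      (fun x hx => (hderivF x hx).hasDerivWithinAt) (hint1.const_mul _)
  have ftc2 : (∫ u in (1/lam)..q, (1/2) * (u / Real.sqrt (lam * u^2 - u))) = G q - G (1/lam) :=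
    intervalIntegral.integral_eq_sub_of_hasDeriv_right_of_le hq.le hcontG
      (fun x hx => (hderivG x hx).hasDerivWithinAt) (hint2.const_mul _)
  rw [intervalIntegral.integral_const_mul] at ftc1 ftc2
  constructor
  · rw [ftc1, hFa, sub_zero]
  · rw [ftc2, hGa, sub_zero]
end
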